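/- arXiv:1310.2229 — 2 statements merged into one kernel-verified Lean document; each statement's English description precedes it below -/
import Mathlib

section
/- Every $\sigma$-straight element of the extended affine Weyl group $\tilde{W}$ is of minimal length in its $\sigma$-conjugacy class in $\tilde{W}$. -/
/-- The `σ`-twisted power: `(w σ)^n = (twistedPow σ w n) ⬝ σ^n` in `\tilde W ⋊ ⟨σ⟩`. -/
def twistedPow {W : Type*} [Group W] (σ : W ≃* W) (w : W) : ℕ → W
  | 0 => 1
  | n + 1 => w * σ (twistedPow σ w n)

/-- Every `σ`-straight element of the extended affine Weyl group is of minimal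
length in its `σ`-conjugacy class.  Here `ℓ` is the length function (invariant
under `σ`, subadditive and inverse-invariant), and `w` is `σ`-straight when
`ℓ((wσ)^n) = n ℓ(w)` for all `n`. -/
theorem straight_minimal_length {W : Type*} [Group W] (σ : W ≃* W) (ℓ : W → ℕ)
    (hℓσ : ∀ u : W, ℓ (σ u) = ℓ u)
    (hℓsub : ∀ u v : W, ℓ (u * v) ≤ ℓ u + ℓ v)
    (hℓinv : ∀ u : W, ℓ u⁻¹ = ℓ u)
    (w : W) (hstraight : ∀ n : ℕ, ℓ (twistedPow σ w n) = n * ℓ w) :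
    ∀ u : W, ℓ w ≤ ℓ (u⁻¹ * w * σ u) := by
  intro u
  set w' := u⁻¹ * w * σ u with hw'
  -- twistedPow σ w' n = u⁻¹ * twistedPow σ w n * σ^[n] u
  have key : ∀ n : ℕ, twistedPow σ w' n = u⁻¹ * twistedPow σ w n * σ^[n] u := by
    intro n
    induction n with
    | zero => simp [twistedPow]
    | succ n ih =>
      simp only [twistedPow, ih, Function.iterate_succ']
      simp [hw', map_mul, mul_assoc]
  have hσiter : ∀ (n : ℕ) (v : W), ℓ (σ^[n] v) = ℓ v := by
    intro n
    induction n with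
    | zero => intro v; simp
    | succ n ih => intro v; rw [Function.iterate_succ', Function.comp_apply, hℓσ, ih]
  -- main inequality: n * ℓ w ≤ n * ℓ w' + 2 * ℓ u
  have main : ∀ n : ℕ, n * ℓ w ≤ n * ℓ w' + 2 * ℓ u := by
    intro n
    have hb : ∀ m : ℕ, ℓ (twistedPow σ w' m) ≤ m * ℓ w' := by
      intro m
      induction m with
      | zero =>
          have h0 := hstraight 0
          simpa [twistedPow] using h0.le
      | succ m ih =>
        calc ℓ (twistedPow σ w' (m+1)) ≤ ℓ w' + ℓ (σ (twistedPow σ w' m)) :=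
              hℓsub _ _
          _ = ℓ w' + ℓ (twistedPow σ w' m) := by rw [hℓσ]
          _ ≤ ℓ w' + m * ℓ w' := by omega
          _ = (m+1) * ℓ w' := by ring
    have h1 : twistedPow σ w n = u * twistedPow σ w' n * (σ^[n] u)⁻¹ := by
      rw [key]; group
    calc n * ℓ w = ℓ (twistedPow σ w n) := (hstraight n).symm
      _ = ℓ (u * twistedPow σ w' n * (σ^[n] u)⁻¹) := by rw [h1]
      _ ≤ ℓ (u * twistedPow σ w' n) + ℓ (σ^[n] u)⁻¹ := hℓsub _ _
      _ ≤ ℓ u + ℓ (twistedPow σ w' n) + ℓ (σ^[n] u)⁻¹ := by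
          have := hℓsub u (twistedPow σ w' n); omega
      _ = ℓ u + ℓ (twistedPow σ w' n) + ℓ u := by rw [hℓinv, hσiter]
      _ ≤ n * ℓ w' + 2 * ℓ u := by have := hb n; omega
  by_contra h
  push_neg at h
  have := main (2 * ℓ u + 1)
  nlinarith [h]
end

section
/- Let $g$ be an affine isometry of a Euclidean space $V$ such that $g^n$ is translation by $n\nu$ for some positive integer $n$ and vector $\nu$. Then for every $p \in V$, $\|\nu\| \leq \|g(p) - p\|$, with equality if and only if $g(p) = p + \nu$. -/
open scoped RealInnerProductSpace

/-- Averaging fact (He–Nie Lemma 2.3): if an affine isometry `g` of a Euclidean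
space has `g^n` equal to translation by `n • ν`, then `‖ν‖ ≤ ‖g p - p‖` for all
`p`, with equality iff `g p = p + ν`. -/
theorem newton_norm_le {V : Type*} [NormedAddCommGroup V] [InnerProductSpace ℝ V]
    (g : V ≃ᵃⁱ[ℝ] V) (n : ℕ) (hn : 0 < n) (ν : V)
    (hg : ∀ p : V, (⇑g)^[n] p = p + (n : ℝ) • ν) :
    ∀ p : V, ‖ν‖ ≤ ‖g p - p‖ ∧ (‖ν‖ = ‖g p - p‖ ↔ g p = p + ν) := by
  intro p
  set L := g.linearIsometryEquiv with hL
  set d := g p - p with hd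
  have hmap : ∀ a b : V, g a - g b = L (a - b) := by
    intro a b
    have := g.map_vsub a b
    simpa [vsub_eq_sub] using this.symm
  have key : ∀ k : ℕ, (⇑g)^[k+1] p - (⇑g)^[k] p = (⇑L)^[k] d := by
    intro k
    induction k with
    | zero => simp [hd]
    | succ k ih =>
      rw [Function.iterate_succ_apply' (⇑g) (k+1), Function.iterate_succ_apply' (⇑g) k,
        Function.iterate_succ_apply' (⇑L) k, ← ih, hmap,
        ← Function.iterate_succ_apply' (⇑g) k]
  have hnormit : ∀ k : ℕ, ‖(⇑L)^[k] d‖ = ‖d‖ := by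
    intro k
    induction k with
    | zero => simp
    | succ k ih => rw [Function.iterate_succ_apply' (⇑L) k, L.norm_map, ih]
  have hsum : ∑ k ∈ Finset.range n, (⇑L)^[k] d = (n : ℝ) • ν := by
    have := Finset.sum_range_sub (fun i => (⇑g)^[i] p) n
    simp only [key] at this
    rw [this]
    simp [hg p]
  constructor
  · have h1 : ‖(n : ℝ) • ν‖ ≤ ∑ k ∈ Finset.range n, ‖(⇑L)^[k] d‖ := by
      rw [← hsum]; exact norm_sum_le _ _
    rw [norm_smul, Real.norm_natCast] at h1
    simp only [hnormit, Finset.sum_const, Finset.card_range, nsmul_eq_mul] at h1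
    have hn' : (0 : ℝ) < n := by exact_mod_cast hn
    exact le_of_mul_le_mul_left h1 hn'
  constructor
  · intro h
    -- show g p = p + ν, i.e. d = ν
    have hcs : ∀ k, ⟪(⇑L)^[k] d, ν⟫ ≤ ‖ν‖ ^ 2 := by
      intro k
      calc ⟪(⇑L)^[k] d, ν⟫ ≤ ‖(⇑L)^[k] d‖ * ‖ν‖ := real_inner_le_norm _ _
        _ = ‖ν‖ ^ 2 := by rw [hnormit, ← h]; ring
    have hS : ∑ k ∈ Finset.range n, ⟪(⇑L)^[k] d, ν⟫ = (n : ℝ) * ‖ν‖ ^ 2 := by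
      rw [← sum_inner, hsum, real_inner_smul_left, real_inner_self_eq_norm_sq]
    obtain ⟨m, rfl⟩ : ∃ m, n = m + 1 := ⟨n - 1, (Nat.succ_pred_eq_of_pos hn).symm⟩
    rw [Finset.sum_range_succ'] at hS
    have hrest : ∑ k ∈ Finset.range m, ⟪(⇑L)^[k+1] d, ν⟫ ≤ (m : ℝ) * ‖ν‖ ^ 2 := by
      calc ∑ k ∈ Finset.range m, ⟪(⇑L)^[k+1] d, ν⟫
          ≤ ∑ k ∈ Finset.range m, ‖ν‖ ^ 2 := Finset.sum_le_sum fun k _ => hcs (k+1)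
        _ = (m : ℝ) * ‖ν‖ ^ 2 := by simp [mul_comm]
    have h0 : ‖ν‖ ^ 2 ≤ ⟪(⇑L)^[0] d, ν⟫ := by
      have : ((m : ℝ) + 1) * ‖ν‖ ^ 2 = (((m : ℕ) + 1 : ℕ) : ℝ) * ‖ν‖ ^ 2 := by push_cast; ring
      nlinarith [hS, hrest]
    simp only [Function.iterate_zero, id_eq] at h0
    have heq : ⟪d, ν⟫ = ‖d‖ * ‖ν‖ := le_antisymm (real_inner_le_norm _ _)
      (by rw [← h]; nlinarith [h0])
    have := inner_eq_norm_mul_iff_real.mp heq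
    -- ‖ν‖ • d = ‖d‖ • ν, with ‖d‖ = ‖ν‖
    rw [← h] at this
    have hdν : d = ν := by
      rcases eq_or_ne ‖ν‖ 0 with h0' | h0'
      · have hν : ν = 0 := norm_eq_zero.mp h0'
        have hD : d = 0 := norm_eq_zero.mp (h ▸ h0')
        rw [hν, hD]
      · exact smul_right_injective V h0' this
    rw [hd] at hdν
    linear_combination (norm := abel) hdν
  · intro h
    rw [hd, h]
    simp
end
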